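/- For all integers n ≥ 2 and 1 ≤ j ≤ n, the constant α(n,j) := (1 − 2/(n+1)) · (n·|Dₙ|/|D_{n−1}|)^{2/(n−1)} · Γ(j+1+2/(n−1))/Γ(j+1) satisfies 1 + ln(n)/n − 2/n ≤ α(n,j) ≤ 1 + 120·ln(n)/n. Moreover, α(n,j) ≥ 1 for all n ≥ 4 and 1 ≤ j ≤ n. -/

import Mathlib

open MeasureTheory

/-- The Lebesgue volume `|Dₖ| = π^{k/2}/Γ(k/2+1)` of the closed Euclidean unit ball
in `ℝᵏ`. -/
noncomputable def unitBallVolume (k : ℕ) : ℝ :=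
  (volume (Metric.closedBall (0 : EuclideanSpace ℝ (Fin k)) 1)).toReal

/-- Affentranger's constant
`α(n,j) = (1 - 2/(n+1)) · (n·|Dₙ|/|D_{n-1}|)^{2/(n-1)} · Γ(j+1+2/(n-1))/Γ(j+1)`. -/
noncomputable def alphaC (n j : ℕ) : ℝ :=
  (1 - 2 / ((n : ℝ) + 1)) *
    ((n : ℝ) * unitBallVolume n / unitBallVolume (n - 1)) ^ (2 / ((n : ℝ) - 1)) *
    (Real.Gamma ((j : ℝ) + 1 + 2 / ((n : ℝ) - 1)) / Real.Gamma ((j : ℝ) + 1))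

/-!
Write `b = n|Dₙ|/|D_{n-1}|`, `ε = 2/(n-1)` and `u = j+1`, so that
`α(n,j) = (1 - 2/(n+1)) · b^ε · Γ(u+ε)/Γ(u)`. Log-convexity of `Γ` gives Wendel's inequality
`Γ(u+ε) ≤ Γ(u) u^ε` for `0 ≤ ε ≤ 1`; since `b = 2√π Γ(n/2+1/2)/Γ(n/2)`, it yields
`4n ≤ b² ≤ 2πn`. For the lower bound, `Γ` increases on `[2, ∞)` and `b^ε ≥ 1 + ε log b`, so
`α(n,j) ≥ (n + log n)/(n+1)`. For the upper bound with `n ≥ 3`,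
`α(n,j) ≤ (b u)^ε ≤ (2πn(n+1)²)^{1/(n-1)} ≤ e^T` with `T = 3(1 + log n)/(n-1)`, and
`e^T ≤ 1 + T e^T` closes the estimate once `n ≥ 4`.
For `n = 2` the exponent `ε = 2` is out of range, but `b = π` and `α(2,j) = π²(j+1)(j+2)/3`.
-/

open Real

theorem Real.Gamma_add_le_mul_rpow {u ε : ℝ} (hu : 0 < u) (hε₀ : 0 ≤ ε) (hε₁ : ε ≤ 1) :
    Gamma (u + ε) ≤ Gamma u * u ^ ε := by
  have hΓu := Gamma_pos_of_pos hu
  have hconv := convexOn_log_Gamma.2 (Set.mem_Ioi.2 hu) (Set.mem_Ioi.2 (by linarith : 0 < u + 1))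
    (sub_nonneg.2 hε₁) hε₀ (sub_add_cancel 1 ε)
  simp only [smul_eq_mul, Function.comp_apply, Gamma_add_one hu.ne',
    log_mul hu.ne' hΓu.ne', show (1 - ε) * u + ε * (u + 1) = u + ε by ring] at hconv
  rw [← log_le_log_iff (Gamma_pos_of_pos (by linarith)) (by positivity),
    log_mul hΓu.ne' (rpow_pos_of_pos hu ε).ne', log_rpow hu]
  linarith

theorem Real.Gamma_add_half_le {x : ℝ} (hx : 0 < x) : Gamma (x + 1 / 2) ≤ Gamma x * √x := by
  rw [sqrt_eq_rpow]
  exact Gamma_add_le_mul_rpow hx (by norm_num) (by norm_num)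

theorem Real.mul_Gamma_le_Gamma_add_half {x : ℝ} (hx : 0 < x) :
    x * Gamma x ≤ Gamma (x + 1 / 2) * √(x + 1 / 2) := by
  have h := Gamma_add_half_le (by positivity : 0 < x + 1 / 2)
  rwa [add_assoc, add_halves, Gamma_add_one hx.ne'] at h

theorem unitBallVolume_eq {k : ℕ} (hk : k ≠ 0) :
    unitBallVolume k = √π ^ k / Gamma (k / 2 + 1) := by
  have : Nonempty (Fin k) := ⟨⟨0, Nat.pos_of_ne_zero hk⟩⟩
  rw [unitBallVolume, EuclideanSpace.volume_closedBall, Fintype.card_fin, ENNReal.ofReal_one,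
    one_pow, one_mul, ENNReal.toReal_ofReal (by positivity)]

noncomputable def ballVolumeRatio (n : ℕ) : ℝ :=
  n * unitBallVolume n / unitBallVolume (n - 1)

theorem ballVolumeRatio_eq {n : ℕ} (hn : 2 ≤ n) :
    ballVolumeRatio n = 2 * √π * Gamma (n / 2 + 1 / 2) / Gamma (n / 2) := by
  have hx : (0 : ℝ) < n / 2 := by positivity
  have harg : ((n - 1 : ℕ) : ℝ) / 2 + 1 = n / 2 + 1 / 2 := by
    rw [Nat.cast_sub (by omega)]; ring
  have hpow : √π ^ n = √π ^ (n - 1) * √π := by rw [← pow_succ, Nat.sub_add_cancel (by omega)]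
  rw [ballVolumeRatio, unitBallVolume_eq (by omega), unitBallVolume_eq (by omega), harg, hpow,
    Gamma_add_one hx.ne']
  field_simp

section ballVolumeRatio

variable {n : ℕ} (hn : 2 ≤ n)
include hn

theorem ballVolumeRatio_pos : 0 < ballVolumeRatio n := by
  rw [ballVolumeRatio_eq hn]
  positivity

theorem ballVolumeRatio_sq_le : ballVolumeRatio n ^ 2 ≤ 2 * π * n := by
  have hx : (0 : ℝ) < n / 2 := by positivity
  have hΓ := Gamma_pos_of_pos hx
  have hb : ballVolumeRatio n ≤ 2 * √π * √(n / 2) := by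
    rw [ballVolumeRatio_eq hn, div_le_iff₀ hΓ, mul_assoc (2 * √π)]
    gcongr
    rw [mul_comm]
    exact Gamma_add_half_le hx
  calc ballVolumeRatio n ^ 2 ≤ (2 * √π * √(n / 2)) ^ 2 := by
        gcongr; exact (ballVolumeRatio_pos hn).le
    _ = 2 * π * n := by
        rw [mul_pow, mul_pow, sq_sqrt pi_pos.le, sq_sqrt hx.le]; ring

theorem four_mul_le_ballVolumeRatio_sq : 4 * n ≤ ballVolumeRatio n ^ 2 := by
  have hN : (2 : ℝ) ≤ n := by exact_mod_cast hn
  set x : ℝ := n / 2 with hx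
  have hΓ := Gamma_pos_of_pos (by positivity : 0 < x)
  set r := Gamma (x + 1 / 2) / Gamma x
  have hr : x ≤ r * √(x + 1 / 2) := by
    rw [div_mul_eq_mul_div, le_div_iff₀ hΓ]
    exact mul_Gamma_le_Gamma_add_half (by positivity)
  have hr2 : x ^ 2 ≤ r ^ 2 * (x + 1 / 2) := by
    calc x ^ 2 ≤ (r * √(x + 1 / 2)) ^ 2 := by gcongr
      _ = r ^ 2 * (x + 1 / 2) := by rw [mul_pow, sq_sqrt (by positivity)]
  have hb : ballVolumeRatio n ^ 2 = 4 * π * r ^ 2 := by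
    rw [ballVolumeRatio_eq hn, mul_div_assoc, mul_pow, mul_pow, sq_sqrt pi_pos.le]; ring
  rw [hb]
  nlinarith [pi_gt_three, sq_nonneg r]

end ballVolumeRatio

theorem ballVolumeRatio_two : ballVolumeRatio 2 = π := by
  rw [ballVolumeRatio_eq le_rfl, show ((2 : ℕ) : ℝ) / 2 + 1 / 2 = 1 / 2 + 1 by norm_num,
    Gamma_add_one (by norm_num), Gamma_one_half_eq]
  norm_num
  linear_combination mul_self_sqrt pi_pos.le

theorem Real.one_le_log_of_three_le {x : ℝ} (hx : 3 ≤ x) : 1 ≤ log x := by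
  rw [le_log_iff_exp_le (by linarith)]
  linarith [exp_one_lt_d9]

theorem Real.exp_le_one_add_mul_exp (t : ℝ) : exp t ≤ 1 + t * exp t := by
  have h := mul_le_mul_of_nonneg_right (add_one_le_exp (-t)) (exp_pos t).le
  rw [← exp_add, neg_add_cancel, exp_zero] at h
  linarith

theorem Real.log_le_div_exp_one {x : ℝ} (hx : 0 < x) : log x ≤ x / exp 1 := by
  have h := log_le_sub_one_of_pos (div_pos hx (exp_pos 1))
  rw [log_div hx.ne' (exp_pos 1).ne', log_exp] at h
  linarith

theorem Real.exp_five_halves_le : exp (5 / 2) ≤ 15 := by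
  have h : exp (5 / 2) ^ 2 = exp 1 ^ 5 := by rw [← exp_nat_mul, ← exp_nat_mul]; norm_num
  have he := exp_one_lt_d9
  refine (pow_le_pow_iff_left₀ (exp_pos _).le (by norm_num) two_ne_zero).1 ?_
  rw [h]
  calc exp 1 ^ 5 ≤ 2.7182818286 ^ 5 := by gcongr
    _ ≤ 15 ^ 2 := by norm_num

theorem rpow_one_div_sub_one_le_one_add_log_div {x : ℝ} (hx : 4 ≤ x) :
    (2 * π * x * (x + 1) ^ 2) ^ (1 / (x - 1)) ≤ 1 + 120 * log x / x := by
  have hx₀ : 0 < x := by linarith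
  have he := exp_one_gt_d9
  set L := log x
  have hL₁ : 1 ≤ L := one_le_log_of_three_le (by linarith)
  have hLx : L * exp 1 ≤ x := (le_div_iff₀ (exp_pos 1)).1 (log_le_div_exp_one hx₀)
  set T := 3 * (1 + L) / (x - 1)
  have hvol : 2 * π * x * (x + 1) ^ 2 ≤ exp (3 * (1 + L)) := by
    have he3 : exp (3 * (1 + L)) = exp 1 ^ 3 * x ^ 3 := by
      rw [mul_add, mul_one, exp_add, ← exp_log hx₀, ← exp_nat_mul, ← exp_nat_mul]
      norm_num [L]
    rw [he3]
    have : (2.7182818283 : ℝ) ^ 3 ≤ exp 1 ^ 3 := by gcongr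
    nlinarith [pi_lt_d2, pow_pos hx₀ 3, sq_nonneg x]
  have hpow : (2 * π * x * (x + 1) ^ 2) ^ (1 / (x - 1)) ≤ exp T := by
    rw [rpow_def_of_pos (by positivity), exp_le_exp, mul_one_div]
    exact div_le_div_of_nonneg_right ((log_le_iff_le_exp (by positivity)).2 hvol) (by linarith)
  have hT₀ : 0 ≤ T := div_nonneg (by linarith) (by linarith)
  have hT : T ≤ 5 / 2 := by
    rw [div_le_iff₀ (by linarith)]; nlinarith
  have hexpT : exp T ≤ 15 := (exp_le_exp.2 hT).trans exp_five_halves_le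
  calc (2 * π * x * (x + 1) ^ 2) ^ (1 / (x - 1)) ≤ exp T := hpow
    _ ≤ 1 + T * exp T := exp_le_one_add_mul_exp T
    _ ≤ 1 + T * 15 := by gcongr
    _ ≤ 1 + 120 * L / x := by
      rw [div_mul_eq_mul_div, add_le_add_iff_left, div_le_div_iff₀ (by linarith) hx₀]
      nlinarith

theorem alphaC_eq (n j : ℕ) :
    alphaC n j = (1 - 2 / ((n : ℝ) + 1)) * ballVolumeRatio n ^ (2 / ((n : ℝ) - 1)) *
      (Gamma ((j : ℝ) + 1 + 2 / ((n : ℝ) - 1)) / Gamma ((j : ℝ) + 1)) :=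
  rfl

theorem one_sub_two_div_add_one_nonneg {x : ℝ} (hx : 1 ≤ x) : 0 ≤ 1 - 2 / (x + 1) := by
  rw [sub_nonneg, div_le_one (by linarith)]
  linarith

theorem add_log_div_le_alphaC {n j : ℕ} (hn : 2 ≤ n) (hj : 1 ≤ j) :
    (n + log n) / (n + 1) ≤ alphaC n j := by
  have hN : (2 : ℝ) ≤ n := by exact_mod_cast hn
  have hu : (2 : ℝ) ≤ j + 1 := by linarith [(by exact_mod_cast hj : (1 : ℝ) ≤ j)]
  set ε := 2 / ((n : ℝ) - 1)
  have hb := ballVolumeRatio_pos hn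
  have hΓ : 1 ≤ Gamma (j + 1 + ε) / Gamma (j + 1) := by
    have hε : 0 ≤ ε := div_nonneg zero_le_two (by linarith)
    rw [one_le_div (Gamma_pos_of_pos (by linarith))]
    exact Gamma_strictMonoOn_Ici.monotoneOn hu (by simp only [Set.mem_Ici]; linarith)
      (by linarith)
  have hpow : 1 + (1 + log n) / (n - 1) ≤ ballVolumeRatio n ^ ε := by
    have hlog4 : 1 ≤ log 4 := one_le_log_of_three_le (by norm_num)
    have hlog := log_le_log (by positivity) (four_mul_le_ballVolumeRatio_sq hn)
    rw [log_pow, log_mul (by norm_num) (by positivity), Nat.cast_ofNat] at hlog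
    have : (1 + log n) / (n - 1) ≤ log (ballVolumeRatio n) * ε := by
      rw [mul_div_assoc', mul_comm]
      exact div_le_div_of_nonneg_right (by linarith) (by linarith)
    rw [rpow_def_of_pos hb]
    linarith [add_one_le_exp (log (ballVolumeRatio n) * ε)]
  have hpre := one_sub_two_div_add_one_nonneg (by linarith : (1 : ℝ) ≤ n)
  calc (n + log n) / (n + 1) = (1 - 2 / (n + 1)) * (1 + (1 + log n) / (n - 1)) * 1 := by
        have : (n : ℝ) - 1 ≠ 0 := by linarith
        field_simp
        ring
    _ ≤ alphaC n j := by
      rw [alphaC_eq]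
      gcongr

theorem alphaC_le_rpow {n : ℕ} (hn : 3 ≤ n) (j : ℕ) :
    alphaC n j ≤ (ballVolumeRatio n * (j + 1)) ^ (2 / ((n : ℝ) - 1)) := by
  have hN : (3 : ℝ) ≤ n := by exact_mod_cast hn
  set ε := 2 / ((n : ℝ) - 1)
  have hε₀ : 0 ≤ ε := div_nonneg zero_le_two (by linarith)
  have hε₁ : ε ≤ 1 := by rw [div_le_one (by linarith)]; linarith
  have hb := ballVolumeRatio_pos (by omega : 2 ≤ n)
  have hΓ₀ := Gamma_pos_of_pos (by positivity : (0 : ℝ) < j + 1)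
  have hΓ : Gamma (j + 1 + ε) / Gamma (j + 1) ≤ (j + 1) ^ ε := by
    rw [div_le_iff₀ hΓ₀, mul_comm]
    exact Gamma_add_le_mul_rpow (by positivity) hε₀ hε₁
  have hpre : 1 - 2 / ((n : ℝ) + 1) ≤ 1 := sub_le_self _ (by positivity)
  calc alphaC n j ≤ 1 * ballVolumeRatio n ^ ε * (j + 1) ^ ε := by
        rw [alphaC_eq]
        gcongr
    _ = (ballVolumeRatio n * (j + 1)) ^ ε := by rw [one_mul, mul_rpow hb.le (by positivity)]

theorem alphaC_le_of_three_le {n j : ℕ} (hn : 3 ≤ n) (hjn : j ≤ n) :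
    alphaC n j ≤ 1 + 120 * log n / n := by
  have hN : (3 : ℝ) ≤ n := by exact_mod_cast hn
  have hb := ballVolumeRatio_pos (by omega : 2 ≤ n)
  set c := ballVolumeRatio n * (j + 1)
  have hc₀ : 0 ≤ c := by positivity
  have hc : c ^ 2 ≤ 2 * π * n * (n + 1) ^ 2 := by
    have hj : (j : ℝ) + 1 ≤ n + 1 := by gcongr
    rw [mul_pow]
    gcongr
    exact ballVolumeRatio_sq_le (by omega)
  refine (alphaC_le_rpow hn j).trans ?_
  obtain rfl | hn₄ := hn.eq_or_lt
  · -- here the exponent is `1`, and `c ≤ √(96π) < 41 ≤ 1 + 40 log 3`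
    have hlog : 1 ≤ log 3 := one_le_log_of_three_le le_rfl
    norm_num at hc ⊢
    nlinarith [pi_lt_d2]
  · calc c ^ (2 / ((n : ℝ) - 1)) = (c ^ 2) ^ (1 / ((n : ℝ) - 1)) := by
          rw [← rpow_natCast, ← rpow_mul hc₀, Nat.cast_ofNat, mul_one_div]
      _ ≤ (2 * π * n * (n + 1) ^ 2) ^ (1 / ((n : ℝ) - 1)) := by
          gcongr; exact one_div_nonneg.2 (by linarith)
      _ ≤ 1 + 120 * log n / n := rpow_one_div_sub_one_le_one_add_log_div (by exact_mod_cast hn₄)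

theorem alphaC_two (j : ℕ) : alphaC 2 j = π ^ 2 / 3 * ((j + 1) * (j + 2)) := by
  rw [alphaC_eq, ballVolumeRatio_two]
  norm_num
  rw [show (j : ℝ) + 1 + 2 = (j + 1 + 1) + 1 by ring, Gamma_add_one (by positivity),
    Gamma_add_one (by positivity)]
  field_simp
  ring

theorem alphaC_two_le {j : ℕ} (hj : j ≤ 2) : alphaC 2 j ≤ 1 + 120 * log 2 / 2 := by
  rw [alphaC_two]
  have hj' : ((j : ℝ) + 1) * (j + 2) ≤ 12 := by
    have : (j : ℝ) ≤ 2 := by exact_mod_cast hj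
    nlinarith [(Nat.cast_nonneg j : (0 : ℝ) ≤ j)]
  have hπ : π ^ 2 ≤ 3.15 ^ 2 := pow_le_pow_left₀ pi_pos.le pi_lt_d2.le 2
  nlinarith [log_two_gt_d9, (by positivity : (0 : ℝ) ≤ ((j : ℝ) + 1) * (j + 2))]

theorem one_add_log_div_sub_le {x : ℝ} (hx : 0 < x) :
    1 + log x / x - 2 / x ≤ (x + log x) / (x + 1) := by
  have hL := log_le_sub_one_of_pos hx
  rw [show 1 + log x / x - 2 / x = (x + log x - 2) / x by field_simp,
    div_le_div_iff₀ hx (by linarith)]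
  nlinarith

/-- For all `n ≥ 2` and `1 ≤ j ≤ n`,
`1 + ln(n)/n - 2/n ≤ α(n,j) ≤ 1 + 120·ln(n)/n`; moreover `α(n,j) ≥ 1` for all `n ≥ 4`
and `1 ≤ j ≤ n`. -/
theorem stmt17 :
    (∀ n j : ℕ, 2 ≤ n → 1 ≤ j → j ≤ n →
      1 + Real.log n / n - 2 / (n : ℝ) ≤ alphaC n j
      ∧ alphaC n j ≤ 1 + 120 * Real.log n / n)
    ∧ ∀ n j : ℕ, 4 ≤ n → 1 ≤ j → j ≤ n → 1 ≤ alphaC n j := by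
  refine ⟨fun n j hn hj hjn => ⟨?_, ?_⟩, fun n j hn hj _ => ?_⟩
  · exact (one_add_log_div_sub_le (by positivity)).trans (add_log_div_le_alphaC hn hj)
  · obtain rfl | hn₃ := hn.eq_or_lt
    · exact_mod_cast alphaC_two_le hjn
    · exact alphaC_le_of_three_le hn₃ hjn
  · have hlog : 1 ≤ log n := one_le_log_of_three_le (by exact_mod_cast (by omega : 3 ≤ n))
    refine le_trans ?_ (add_log_div_le_alphaC (by omega) hj)
    rw [one_le_div (by positivity)]
    linarith
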